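/- Let A be a complex Banach algebra with identity and let a, b ∈ A both be strongly Drazin invertible, with b^D the strongly Drazin inverse of b. If b^D a = 0 and ab = ba, then the 2×2 anti-triangular matrix with rows (a, 1) and (b, 0) is Hirano invertible in M₂(A). -/

import Mathlib

/-!
If `x - x³` is nilpotent then `x` is Hirano invertible: `x² - x⁴` is nilpotent, so Newton
iteration lifts `x²` to an idempotent `e` in the commutative subring generated by `x`, and
`x * e * (1 + (x² - e) * e)⁻¹` is a Hirano inverse of `x`.

For `M = !![a, 1; b, 0]`, strong Drazin invertibility makes `a - a²` and `b - b²` nilpotent, and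
`bᴰ a = 0` forces `bⁿ a = 0`. As `a` and `b` commute, `M - M³` may be computed over a commutative
ring; modulo its nilradical `a` and `b` are orthogonal idempotents, so the trace and determinant
of `M - M³` are nilpotent, and by Cayley–Hamilton so is `M - M³`.
-/

/-- An element of a ring is *Hirano invertible* if there exists `x` with
`a * x = x * a`, `x = x * a * x`, and `a ^ 2 - a * x` nilpotent. -/
def IsHirano {R : Type*} [Ring R] (a : R) : Prop :=
  ∃ x : R, a * x = x * a ∧ x = x * a * x ∧ IsNilpotent (a ^ 2 - a * x)

/-- `y` is the *strongly Drazin inverse* of `b`: `b * y = y * b`, `y = y * b * y`,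
and `b - b * y` is nilpotent. -/
def IsSDrazinInv {R : Type*} [Ring R] (b y : R) : Prop :=
  b * y = y * b ∧ y = y * b * y ∧ IsNilpotent (b - b * y)

open Polynomial in
theorem exists_isIdempotentElem_isNilpotent_sub {S : Type*} [CommRing S] {z : S}
    (hz : IsNilpotent (z - z ^ 2)) : ∃ e : S, IsIdempotentElem e ∧ IsNilpotent (z - e) := by
  have hP : IsNilpotent (aeval z (X ^ 2 - X : S[X])) := by simpa using hz.neg
  have hP' : IsUnit (aeval z (derivative (X ^ 2 - X : S[X]))) := by
    have hsq : (2 * z - 1) ^ 2 = 1 - 4 * (z - z ^ 2) := by ring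
    have := ((Commute.all 4 _).isNilpotent_mul_left hz).isUnit_one_sub
    rw [← hsq, isUnit_pow_iff two_ne_zero] at this
    simpa [one_add_one_eq_two] using this
  obtain ⟨e, ⟨hze, he⟩, -⟩ := existsUnique_nilpotent_sub_and_aeval_eq_zero hP hP'
  refine ⟨e, ?_, hze⟩
  simpa [IsIdempotentElem, sq, sub_eq_zero] using he

theorem IsHirano.map {R T : Type*} [Ring R] [Ring T] {x : R} (hx : IsHirano x) (f : R →+* T) :
    IsHirano (f x) := by
  obtain ⟨y, hxy, hyxy, hnil⟩ := hx
  refine ⟨f y, by rw [← map_mul, hxy, map_mul], by rw [← map_mul, ← map_mul, ← hyxy], ?_⟩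
  simpa using hnil.map f

theorem isHirano_of_isNilpotent_sub_pow_three_of_commRing {S : Type*} [CommRing S] {x : S}
    (hx : IsNilpotent (x - x ^ 3)) : IsHirano x := by
  have hsq : IsNilpotent (x ^ 2 - (x ^ 2) ^ 2) := by
    rw [show x ^ 2 - (x ^ 2) ^ 2 = x * (x - x ^ 3) by ring]
    exact (Commute.all _ _).isNilpotent_mul_left hx
  obtain ⟨e, he, hxe⟩ := exists_isIdempotentElem_isNilpotent_sub hsq
  -- `u` acts as `x ^ 2` on `e * S` and as `1` on `(1 - e) * S`
  set u := 1 + (x ^ 2 - e) * e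
  have hu : IsUnit u := ((Commute.all _ _).isNilpotent_mul_right hxe).isUnit_one_add
  have hue : u * e = x ^ 2 * e := by linear_combination (x ^ 2 - e - 1) * he.eq
  have huv : u * Ring.inverse u = 1 := Ring.mul_inverse_cancel u hu
  have hxX : x * (x * e * Ring.inverse u) = e := by
    linear_combination e * huv - Ring.inverse u * hue
  refine ⟨x * e * Ring.inverse u, mul_comm _ _, ?_, by rwa [hxX]⟩
  linear_combination (-(x * e * Ring.inverse u)) * hxX - x * Ring.inverse u * he.eq

open scoped IsMulCommutative in
theorem isHirano_of_isNilpotent_sub_pow_three {R : Type*} [Ring R] {x : R}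
    (hx : IsNilpotent (x - x ^ 3)) : IsHirano x := by
  let S := Subring.closure {x}
  have : IsMulCommutative S := Subring.isMulCommutative_closure (by simp)
  let x' : S := ⟨x, Subring.subset_closure rfl⟩
  have hx' : IsNilpotent (x' - x' ^ 3) :=
    (IsNilpotent.map_iff (f := S.subtype) Subtype.val_injective).mp hx
  exact (isHirano_of_isNilpotent_sub_pow_three_of_commRing hx').map S.subtype

theorem IsSDrazinInv.isNilpotent_sub_sq {R : Type*} [Ring R] {x y : R} (h : IsSDrazinInv x y) :
    IsNilpotent (x - x ^ 2) := by
  obtain ⟨hxy, hyxy, hnil⟩ := h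
  have hp : x * y * (x * y) = x * y := by rw [mul_assoc x y, ← mul_assoc y, ← hyxy]
  have hxp : Commute x (x * y) := by
    change x * (x * y) = x * y * x
    rw [mul_assoc x y x, ← hxy]
  set p := x * y
  have hfac : x - x ^ 2 = (x - p) * (1 - x - p) :=
    calc x - x ^ 2 = x - x ^ 2 + (p * x - x * p) + (p * p - p) := by rw [hxp.eq, hp]; abel
      _ = (x - p) * (1 - x - p) := by noncomm_ring
  have hcomm : Commute (x - p) (1 - x - p) :=
    ((Commute.one_right _).sub_right ((Commute.refl x).sub_left hxp.symm)).sub_right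
      (hxp.sub_left (Commute.refl p))
  rw [hfac]
  exact hcomm.isNilpotent_mul_right hnil

theorem IsSDrazinInv.exists_pow_mul_eq_zero {R : Type*} [Ring R] {a b bD : R}
    (hb : IsSDrazinInv b bD) (h : bD * a = 0) : ∃ n : ℕ, b ^ n * a = 0 := by
  obtain ⟨hbbD, -, n, hn⟩ := hb
  have hfix : ∀ k : ℕ, (1 - bD) ^ k * a = a := by
    intro k
    induction k with
    | zero => simp
    | succ k ih => rw [pow_succ, mul_assoc, sub_mul, one_mul, h, sub_zero, ih]
  refine ⟨n, ?_⟩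
  calc b ^ n * a = (b * (1 - bD)) ^ n * a := by
        rw [((Commute.one_right b).sub_right hbbD).mul_pow, mul_assoc, hfix]
    _ = 0 := by rw [mul_sub, mul_one, hn, zero_mul]

theorem Matrix.isNilpotent_of_isNilpotent_trace_of_isNilpotent_det {S : Type*} [CommRing S]
    {N : Matrix (Fin 2) (Fin 2) S} (ht : IsNilpotent N.trace) (hd : IsNilpotent N.det) :
    IsNilpotent N := by
  have hCH : N ^ 2 = N.trace • N - N.det • 1 := by
    rw [N.eta_fin_two]
    ext i j
    fin_cases i <;> fin_cases j <;> simp [sq] <;> ring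
  let ι := algebraMap S (Matrix (Fin 2) (Fin 2) S)
  have htN : IsNilpotent (ι N.trace * N) :=
    (Algebra.commute_algebraMap_left _ N).isNilpotent_mul_right (ht.map ι)
  have hcomm : Commute (ι N.trace * N) (ι N.det) :=
    (Algebra.commute_algebraMap_right _ _).mul_left (Algebra.commute_algebraMap_right _ _)
  refine IsNilpotent.of_pow (m := 2) ?_
  rw [hCH, Algebra.smul_def, Algebra.smul_def, mul_one]
  exact hcomm.isNilpotent_sub htN (hd.map ι)

theorem isNilpotent_antiTriangular_sub_pow_three_of_commRing {S : Type*} [CommRing S] {a b : S}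
    {n : ℕ} (ha : IsNilpotent (a - a ^ 2)) (hb : IsNilpotent (b - b ^ 2)) (hba : b ^ n * a = 0) :
    IsNilpotent (!![a, 1; b, 0] - !![a, 1; b, 0] ^ 3) := by
  have hab : IsNilpotent (a * b) := ⟨n + 1, by linear_combination a ^ n * b * hba⟩
  rw [← mem_nilradical] at ha hb hab
  have hN : (!![a, 1; b, 0] - !![a, 1; b, 0] ^ 3 : Matrix (Fin 2) (Fin 2) S) =
      !![a - a ^ 3 - 2 * (a * b), 1 - a ^ 2 - b; b - a ^ 2 * b - b ^ 2, -(a * b)] := by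
    ext i j
    fin_cases i <;> fin_cases j <;> simp [pow_succ] <;> ring
  rw [hN]
  refine Matrix.isNilpotent_of_isNilpotent_trace_of_isNilpotent_det ?_ ?_ <;>
    rw [← mem_nilradical]
  · rw [Matrix.trace_fin_two_of, show a - a ^ 3 - 2 * (a * b) + -(a * b) =
      (1 + a) * (a - a ^ 2) - 3 * (a * b) by ring]
    exact sub_mem (Ideal.mul_mem_left _ _ ha) (Ideal.mul_mem_left _ _ hab)
  · rw [Matrix.det_fin_two_of, show (a - a ^ 3 - 2 * (a * b)) * -(a * b) -
      (1 - a ^ 2 - b) * (b - a ^ 2 * b - b ^ 2) =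
      -(a - a ^ 3 - 2 * (a * b)) * (a * b) - (1 - a ^ 2 - b) * ((b - b ^ 2) - a * (a * b)) by ring]
    exact sub_mem (Ideal.mul_mem_left _ _ hab)
      (Ideal.mul_mem_left _ _ (sub_mem hb (Ideal.mul_mem_left _ _ hab)))

open scoped IsMulCommutative in
theorem isNilpotent_antiTriangular_sub_pow_three {R : Type*} [Ring R] {a b : R} {n : ℕ}
    (hab : Commute a b) (ha : IsNilpotent (a - a ^ 2)) (hb : IsNilpotent (b - b ^ 2))
    (hba : b ^ n * a = 0) :
    IsNilpotent (!![a, 1; b, 0] - !![a, 1; b, 0] ^ 3) := by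
  let S := Subring.closure {a, b}
  have : IsMulCommutative S := Subring.isMulCommutative_closure <| by
    rintro x (rfl | rfl) y (rfl | rfl) <;> simp [hab.eq]
  let a' : S := ⟨a, Subring.subset_closure (by simp)⟩
  let b' : S := ⟨b, Subring.subset_closure (by simp)⟩
  have hinj : Function.Injective S.subtype := Subtype.val_injective
  have hM : S.subtype.mapMatrix !![a', 1; b', 0] = !![a, 1; b, 0] := by
    ext i j; fin_cases i <;> fin_cases j <;> rfl
  have hba' : b' ^ n * a' = 0 := hinj (by simpa using hba)
  have := (isNilpotent_antiTriangular_sub_pow_three_of_commRing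
    ((IsNilpotent.map_iff hinj).mp ha) ((IsNilpotent.map_iff hinj).mp hb) hba').map
    S.subtype.mapMatrix
  rwa [map_sub, map_pow, hM] at this

theorem hirano_anti_triangular_commute_general {A : Type*} [NormedRing A]
    (a b bD : A) (ha : ∃ y, IsSDrazinInv a y) (hb : IsSDrazinInv b bD)
    (h1 : bD * a = 0) (h2 : a * b = b * a) :
    IsHirano (!![a, 1; b, (0 : A)] : Matrix (Fin 2) (Fin 2) A) := by
  obtain ⟨y, hy⟩ := ha
  obtain ⟨n, hn⟩ := hb.exists_pow_mul_eq_zero h1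
  exact isHirano_of_isNilpotent_sub_pow_three
    (isNilpotent_antiTriangular_sub_pow_three h2 hy.isNilpotent_sub_sq hb.isNilpotent_sub_sq hn)

/-- If `a, b` are both strongly Drazin invertible, `bD` is the strong Drazin
inverse of `b`, `bD * a = 0` and `a * b = b * a`, then `!![a, 1; b, 0]`
is Hirano invertible in `M₂(A)`. -/
theorem hirano_anti_triangular_commute {A : Type*} [NormedRing A] [NormedAlgebra ℂ A]
    [CompleteSpace A] (a b bD : A) (ha : ∃ y, IsSDrazinInv a y) (hb : IsSDrazinInv b bD)
    (h1 : bD * a = 0) (h2 : a * b = b * a) :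
    IsHirano (!![a, 1; b, (0 : A)] : Matrix (Fin 2) (Fin 2) A) :=
  hirano_anti_triangular_commute_general a b bD ha hb h1 h2
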